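/- Let f : {0,1}ⁿ → {0,1}ⁿ and let (σ(τ))_{τ≥0} be a sequence of Boolean states such that: (i) for every τ ≥ 0 and every i ∈ [n], σ(τ+1)ᵢ = fᵢ(σ(τ)) or σ(τ+1)ᵢ = σ(τ)ᵢ; and (ii) for every τ ≥ 0, σ(τ+1) = σ(τ) if and only if σ(τ) is a fixed point of f (i.e., f(σ(τ)) = σ(τ)). If the trajectory of σ(0) under f is one-stepping, then σ(τ) = f^τ(σ(0)) for all τ ≥ 0. -/

import Mathlib

/-!
Induct on `τ`, with `x = σ τ = f^[τ] (σ 0)`. One-stepping says `x` and `f x` differ in at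
most one coordinate. If they agree, (i) pins `σ (τ + 1)` to `x = f x`. Otherwise (ii) forces
`σ (τ + 1) ≠ x`, so some coordinate was updated to `f x`; it can only be the one coordinate where
`x` and `f x` differ, and at all others the two choices allowed by (i) coincide.
-/

section HammingStep

variable {ι : Type*} [Fintype ι] {β : ι → Type*} [∀ i, DecidableEq (β i)]

theorem eq_of_hammingDist_le_one_of_ne_of_ne {x z : ∀ i, β i} (hxz : hammingDist x z ≤ 1)
    {i j : ι} (hi : x i ≠ z i) (hj : x j ≠ z j) : i = j :=
  Finset.card_le_one.mp hxz i (by simpa using hi) j (by simpa using hj)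

theorem eq_of_forall_eq_or_eq_of_hammingDist_le_one {x y z : ∀ i, β i}
    (hy : ∀ i, y i = z i ∨ y i = x i) (hxz : hammingDist x z ≤ 1) (hyx : y ≠ x) : y = z := by
  obtain ⟨i, hi⟩ := Function.ne_iff.mp hyx
  have hyz_i : y i = z i := (hy i).resolve_right hi
  have hxz_i : x i ≠ z i := hyz_i ▸ Ne.symm hi
  funext j
  rcases hy j with h | h
  · exact h
  · by_cases hxz_j : x j = z j
    · exact h.trans hxz_j
    · obtain rfl := eq_of_hammingDist_le_one_of_ne_of_ne hxz hxz_i hxz_j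
      exact hyz_i

end HammingStep

theorem stmt_3 (n : ℕ) (f : (Fin n → Bool) → Fin n → Bool)
    (σ : ℕ → Fin n → Bool)
    (hi : ∀ τ i, σ (τ + 1) i = f (σ τ) i ∨ σ (τ + 1) i = σ τ i)
    (hii : ∀ τ, σ (τ + 1) = σ τ ↔ f (σ τ) = σ τ)
    (hone : ∀ τ, hammingDist (f^[τ] (σ 0)) (f^[τ + 1] (σ 0)) ≤ 1) :
    ∀ τ, σ τ = f^[τ] (σ 0) := by
  intro τ
  induction τ with
  | zero => rfl
  | succ τ ih =>
    have hdist : hammingDist (σ τ) (f (σ τ)) ≤ 1 := by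
      simpa only [Function.iterate_succ_apply', ← ih] using hone τ
    rw [Function.iterate_succ_apply', ← ih]
    by_cases hstay : σ (τ + 1) = σ τ
    · rw [hstay, (hii τ).mp hstay]
    · exact eq_of_forall_eq_or_eq_of_hammingDist_le_one (hi τ) hdist hstay
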